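/- Work in ℚ(q,t) with q, t algebraically independent. For every partition λ: (i) N_{λ,∅}(1) = 0 if and only if λ ≠ ∅; (ii) N_{λ,∅}(t) = 0 if and only if λ has at least two nonzero parts; (iii) N_{∅,λ}(q/t) = 0 if and only if λ ≠ ∅; (iv) N_{∅,λ}(q/t²) = 0 if and only if λ has at least two nonzero parts. Consequently, for partitions ν₁, ν₂, μ₁, μ₂, the product N_{∅,ν₁}(q/t) · N_{∅,ν₂}(q/t²) · N_{μ₁,∅}(1) · N_{μ₂,∅}(t) is nonzero if and only if ν₁ = μ₁ = ∅ and each of ν₂, μ₂ has at most one nonzero part. -/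

import Mathlib

/-!
STATEMENT 10.  Vanishing properties of Nekrasov factors in `ℚ(q,t)`:
`N_{λ,∅}(1) = 0 ↔ λ ≠ ∅`; `N_{λ,∅}(t) = 0 ↔ λ` has ≥ 2 nonzero parts;
`N_{∅,λ}(q/t) = 0 ↔ λ ≠ ∅`; `N_{∅,λ}(q/t²) = 0 ↔ λ` has ≥ 2 nonzero parts.
Consequently `N_{∅,ν₁}(q/t)·N_{∅,ν₂}(q/t²)·N_{μ₁,∅}(1)·N_{μ₂,∅}(t) ≠ 0` iff
`ν₁ = μ₁ = ∅` and each of `ν₂, μ₂` has at most one nonzero part.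
-/

noncomputable section

open Finset

/-- `ℚ(q,t)`. -/
abbrev F2 : Type := FractionRing (MvPolynomial (Fin 2) ℚ)

def q : F2 := algebraMap (MvPolynomial (Fin 2) ℚ) F2 (MvPolynomial.X 0)
def t : F2 := algebraMap (MvPolynomial (Fin 2) ℚ) F2 (MvPolynomial.X 1)

/-- A partition, encoded as the list `[λ₁, λ₂, …]` of its parts: a nonincreasing
finite sequence of positive integers. -/
def IsPartition (l : List ℕ) : Prop := l.Pairwise (· ≥ ·) ∧ ∀ p ∈ l, 0 < p

/-- The `i`-th part `λ_i` (`i ≥ 1`; zero outside the range). -/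
def part (l : List ℕ) (i : ℕ) : ℕ := l.getD (i - 1) 0

/-- The conjugate partition: `λ′_j = #{i | λ_i ≥ j}`. -/
def conj (l : List ℕ) (j : ℕ) : ℕ := (l.filter fun p => j ≤ p).length

/-- The Nekrasov factor
`N_{λ,η}(z) = ∏_{(i,j)∈λ}(1 − z q^{λ_i−j} t^{η′_j−i+1}) ·
             ∏_{(i,j)∈η}(1 − z q^{−η_i+j−1} t^{−λ′_j+i})`,
where boxes `(i,j)` are indexed with `1 ≤ i`, `1 ≤ j ≤ λ_i` (below `i0, j0` run
over the 0-based indices `i−1, j−1`). -/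
def Nek (l e : List ℕ) (z : F2) : F2 :=
  (∏ i0 ∈ Finset.range l.length, ∏ j0 ∈ Finset.range (part l (i0 + 1)),
      (1 - z * q ^ ((part l (i0 + 1) : ℤ) - (j0 + 1)) * t ^ ((conj e (j0 + 1) : ℤ) - i0))) *
  (∏ i0 ∈ Finset.range e.length, ∏ j0 ∈ Finset.range (part e (i0 + 1)),
      (1 - z * q ^ (-(part e (i0 + 1) : ℤ) + j0) * t ^ (-(conj l (j0 + 1) : ℤ) + (i0 + 1))))

lemma hq0 : q ≠ 0 := by
  simpa [q, map_eq_zero_iff _ (IsFractionRing.injective (MvPolynomial (Fin 2) ℚ) F2)]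
    using MvPolynomial.X_ne_zero (R := ℚ) 0

lemma ht0 : t ≠ 0 := by
  simpa [t, map_eq_zero_iff _ (IsFractionRing.injective (MvPolynomial (Fin 2) ℚ) F2)]
    using MvPolynomial.X_ne_zero (R := ℚ) 1

lemma qt_nat (m n p r : ℕ) (h : q ^ m * t ^ n = q ^ p * t ^ r) : m = p ∧ n = r := by
  have h2 : (MvPolynomial.X 0 : MvPolynomial (Fin 2) ℚ) ^ m * MvPolynomial.X 1 ^ n
      = MvPolynomial.X 0 ^ p * MvPolynomial.X 1 ^ r := by
    apply IsFractionRing.injective (MvPolynomial (Fin 2) ℚ) F2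
    simpa [q, t, map_mul, map_pow] using h
  rw [MvPolynomial.X_pow_eq_monomial, MvPolynomial.X_pow_eq_monomial,
    MvPolynomial.X_pow_eq_monomial, MvPolynomial.X_pow_eq_monomial,
    MvPolynomial.monomial_mul, MvPolynomial.monomial_mul] at h2
  have h3 := MvPolynomial.monomial_left_injective (one_ne_zero (α := ℚ)) (by simpa using h2)
  constructor
  · have := DFunLike.congr_fun h3 0
    simpa [Finsupp.single_apply] using this
  · have := DFunLike.congr_fun h3 1
    simpa [Finsupp.single_apply] using this

lemma qt_zpow (a b : ℤ) : q ^ a * t ^ b = 1 ↔ a = 0 ∧ b = 0 := by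
  constructor
  · intro h
    have h2 : q ^ (a.toNat : ℤ) * t ^ (b.toNat : ℤ)
        = q ^ (((-a).toNat : ℤ)) * t ^ (((-b).toNat : ℤ)) := by
      have ha : (a.toNat : ℤ) = a + (-a).toNat := by omega
      have hb : (b.toNat : ℤ) = b + (-b).toNat := by omega
      calc q ^ (a.toNat : ℤ) * t ^ (b.toNat : ℤ)
          = (q ^ a * t ^ b) * (q ^ (((-a).toNat : ℤ)) * t ^ (((-b).toNat : ℤ))) := by
            rw [ha, hb, zpow_add₀ hq0, zpow_add₀ ht0]; ring
        _ = q ^ (((-a).toNat : ℤ)) * t ^ (((-b).toNat : ℤ)) := by rw [h]; ring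
    rw [zpow_natCast, zpow_natCast, zpow_natCast, zpow_natCast] at h2
    have := qt_nat _ _ _ _ h2
    omega
  · rintro ⟨rfl, rfl⟩; simp

lemma factor_zero (a b : ℤ) : (1 : F2) - q ^ a * t ^ b = 0 ↔ a = 0 ∧ b = 0 := by
  rw [sub_eq_zero, eq_comm, qt_zpow]

lemma f1 (A B : ℤ) : (1 : F2) - 1 * q ^ A * t ^ B = 0 ↔ A = 0 ∧ B = 0 := by
  rw [one_mul, factor_zero]

lemma f2 (A B : ℤ) : (1 : F2) - t * q ^ A * t ^ B = 0 ↔ A = 0 ∧ B = -1 := by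
  have : t * q ^ A * t ^ B = q ^ A * t ^ (B + 1) := by
    rw [zpow_add_one₀ ht0]; ring
  rw [this, factor_zero]; omega

lemma f3 (A B : ℤ) : (1 : F2) - (q / t) * q ^ A * t ^ B = 0 ↔ A = -1 ∧ B = 1 := by
  have : (q / t) * q ^ A * t ^ B = q ^ (A + 1) * t ^ (B - 1) := by
    rw [zpow_add_one₀ hq0, zpow_sub_one₀ ht0, div_eq_mul_inv]; ring
  rw [this, factor_zero]; omega

lemma f4 (A B : ℤ) : (1 : F2) - (q / t ^ 2) * q ^ A * t ^ B = 0 ↔ A = -1 ∧ B = 2 := by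
  have : (q / t ^ 2) * q ^ A * t ^ B = q ^ (A + 1) * t ^ (B - 2) := by
    have : t ^ (B - 2) = t ^ B * (t ^ 2)⁻¹ := by
      rw [show B - 2 = B + (-2) by ring, zpow_add₀ ht0]
      norm_num [zpow_neg, zpow_ofNat]
    rw [zpow_add_one₀ hq0, this, div_eq_mul_inv]; ring
  rw [this, factor_zero]; omega


lemma conj_nil (j : ℕ) : conj [] j = 0 := rfl

lemma part_pos (l : List ℕ) (hl : IsPartition l) {k : ℕ} (hk : k < l.length) :
    0 < part l (k + 1) := by
  have : l.getD k 0 = l.get ⟨k, hk⟩ := List.getD_eq_get l 0 ⟨k, hk⟩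
  simp only [part, Nat.add_sub_cancel]
  rw [this]
  exact hl.2 _ (List.get_mem l ⟨k, hk⟩)

/-- key combinatorial equivalence -/
lemma comb (l : List ℕ) (hl : IsPartition l) (k : ℕ) :
    (∃ i0 < l.length, ∃ j0 < part l (i0 + 1), i0 = k ∧ (j0 : ℤ) + 1 = part l (i0 + 1)) ↔
      k < l.length := by
  constructor
  · rintro ⟨i0, hi, j0, hj, rfl, -⟩; exact hi
  · intro hk
    refine ⟨k, hk, part l (k + 1) - 1, ?_, rfl, ?_⟩
    · have := part_pos l hl hk; omega
    · have := part_pos l hl hk; push_cast; omega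



/-- `Nek l [] z` vanishing, for `z` whose factor vanishes iff `A = 0 ∧ B = -k`. -/
lemma nek_left (l : List ℕ) (hl : IsPartition l) (z : F2) (k : ℕ)
    (hz : ∀ A B : ℤ, ((1 : F2) - z * q ^ A * t ^ B = 0) ↔ A = 0 ∧ B = -(k : ℤ)) :
    Nek l [] z = 0 ↔ k < l.length := by
  rw [Nek]
  simp only [List.length_nil, Finset.range_zero, Finset.prod_empty, mul_one]
  rw [Finset.prod_eq_zero_iff]
  simp only [Finset.prod_eq_zero_iff, Finset.mem_range]
  rw [← comb l hl k]
  apply exists_congr; intro i0; apply and_congr_right'; apply exists_congr; intro j0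
  apply and_congr_right'
  rw [hz]
  simp only [conj_nil, Nat.cast_zero]
  omega

/-- `Nek [] l z` vanishing, for `z` whose factor vanishes iff `A = -1 ∧ B = k+1`. -/
lemma nek_right (l : List ℕ) (hl : IsPartition l) (z : F2) (k : ℕ)
    (hz : ∀ A B : ℤ, ((1 : F2) - z * q ^ A * t ^ B = 0) ↔ A = -1 ∧ B = (k : ℤ) + 1) :
    Nek [] l z = 0 ↔ k < l.length := by
  rw [Nek]
  simp only [List.length_nil, Finset.range_zero, Finset.prod_empty, one_mul]
  rw [Finset.prod_eq_zero_iff]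
  simp only [Finset.prod_eq_zero_iff, Finset.mem_range]
  rw [← comb l hl k]
  apply exists_congr; intro i0; apply and_congr_right'; apply exists_congr; intro j0
  apply and_congr_right'
  rw [hz]
  simp only [conj_nil, Nat.cast_zero]
  omega

lemma main1 (l : List ℕ) (hl : IsPartition l) :
    (Nek l [] 1 = 0 ↔ l ≠ []) ∧
    (Nek l [] t = 0 ↔ 2 ≤ l.length) ∧
    (Nek [] l (q / t) = 0 ↔ l ≠ []) ∧
    (Nek [] l (q / t ^ 2) = 0 ↔ 2 ≤ l.length) := by
  refine ⟨?_, ?_, ?_, ?_⟩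
  · rw [nek_left l hl 1 0 (fun A B => by simpa using f1 A B)]
    simp [List.length_pos_iff]
  · rw [nek_left l hl t 1 (fun A B => by simpa using f2 A B)]
    omega
  · rw [nek_right l hl (q / t) 0 (fun A B => by simpa using f3 A B)]
    simp [List.length_pos_iff]
  · rw [nek_right l hl (q / t ^ 2) 1 (fun A B => by simpa using f4 A B)]
    omega


theorem stmt10 :
    (∀ l : List ℕ, IsPartition l →
      ((Nek l [] 1 = 0 ↔ l ≠ []) ∧
       (Nek l [] t = 0 ↔ 2 ≤ l.length) ∧
       (Nek [] l (q / t) = 0 ↔ l ≠ []) ∧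
       (Nek [] l (q / t ^ 2) = 0 ↔ 2 ≤ l.length))) ∧
    (∀ ν₁ ν₂ μ₁ μ₂ : List ℕ, IsPartition ν₁ → IsPartition ν₂ → IsPartition μ₁ →
      IsPartition μ₂ →
      (Nek [] ν₁ (q / t) * Nek [] ν₂ (q / t ^ 2) * Nek μ₁ [] 1 * Nek μ₂ [] t ≠ 0 ↔
        ν₁ = [] ∧ μ₁ = [] ∧ ν₂.length ≤ 1 ∧ μ₂.length ≤ 1)) := by
  refine ⟨main1, ?_⟩
  intro ν₁ ν₂ μ₁ μ₂ h1 h2 h3 h4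
  rw [mul_ne_zero_iff, mul_ne_zero_iff, mul_ne_zero_iff]
  have e1 := (main1 ν₁ h1).2.2.1
  have e2 := (main1 ν₂ h2).2.2.2
  have e3 := (main1 μ₁ h3).1
  have e4 := (main1 μ₂ h4).2.1
  simp only [ne_eq, e1, e2, e3, e4, not_not, not_le]
  constructor
  · rintro ⟨⟨⟨a, b⟩, c⟩, d⟩
    exact ⟨a, c, by omega, by omega⟩
  · rintro ⟨a, b, c, d⟩
    exact ⟨⟨⟨a, by omega⟩, b⟩, by omega⟩
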